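/- For real z with 0 < z < 1, ₂F₁(3/2, 2; 5/2; z) = (3/(2z))·(1/(1-z) − arctanh(√z)/√z). -/

import Mathlib

open Real

/-- Inverse hyperbolic tangent: . -/
noncomputable def arctanh' (x : ℝ) : ℝ := (1 / 2) * Real.log ((1 + x) / (1 - x))

/-- Pochhammer symbol (rising factorial) on the reals. -/
noncomputable def poch (a : ℝ) (n : ℕ) : ℝ := (ascPochhammer ℝ n).eval a

/-- Gauss hypergeometric series `₂F₁(a, b; c; z)`. -/
noncomputable def twoF1 (a b c z : ℝ) : ℝ :=
  ∑' n : ℕ, poch a n * poch b n / poch c n * z ^ n / (Nat.factorial n)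

lemma poch_two (n : ℕ) : poch 2 n = (Nat.factorial (n + 1) : ℝ) := by
  induction n with
  | zero => simp [poch]
  | succ n ih =>
    rw [poch, ascPochhammer_succ_eval, ← poch, ih]
    push_cast [Nat.factorial_succ]
    ring

lemma poch_ratio (n : ℕ) : poch (5/2) n * 3 = poch (3/2) n * (2 * n + 3) := by
  induction n with
  | zero => simp [poch]
  | succ n ih =>
    rw [poch, poch, ascPochhammer_succ_eval, ascPochhammer_succ_eval, ← poch, ← poch]
    have : poch (5/2) n * (5/2 + n) * 3 = (poch (5/2) n * 3) * (5/2 + n) := by ring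
    rw [this, ih]
    push_cast
    ring

lemma poch_32_pos (n : ℕ) : 0 < poch (3/2 : ℝ) n :=
  ascPochhammer_pos n _ (by norm_num)

lemma term_eq (z : ℝ) (n : ℕ) :
    poch (3/2) n * poch 2 n / poch (5/2) n * z ^ n / (Nat.factorial n)
      = 3 * (n + 1) / (2 * n + 3) * z ^ n := by
  have h3 : poch (5/2 : ℝ) n = poch (3/2) n * (2 * n + 3) / 3 := by
    have := poch_ratio n; linarith
  have hp := poch_32_pos n
  have hfac : (0 : ℝ) < (Nat.factorial n : ℝ) := by positivity
  have h23 : (0:ℝ) < 2 * n + 3 := by positivity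
  rw [poch_two, h3]
  push_cast [Nat.factorial_succ]
  field_simp

/-- For `0 < z < 1`, `₂F₁(3/2, 2; 5/2; z) = (3/(2z))(1/(1-z) − arctanh(√z)/√z)`. -/
theorem twoF1_three_halves_two_five_halves (z : ℝ) (h0 : 0 < z) (h1 : z < 1) :
    twoF1 (3 / 2) 2 (5 / 2) z
      = (3 / (2 * z)) * (1 / (1 - z) - arctanh' (Real.sqrt z) / Real.sqrt z) := by
  set x := Real.sqrt z with hx
  have hx0 : 0 < x := Real.sqrt_pos.2 h0
  have hx2 : x ^ 2 = z := Real.sq_sqrt h0.le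
  have hx1 : x < 1 := by
    nlinarith [Real.sqrt_nonneg z]
  have hxabs : |x| < 1 := by rw [abs_of_pos hx0]; exact hx1
  -- geometric series
  have hgeo : HasSum (fun n : ℕ => z ^ n) (1 / (1 - z)) := by
    simpa [one_div] using hasSum_geometric_of_lt_one h0.le h1
  -- arctanh series
  have hlog := hasSum_log_sub_log_of_abs_lt_one hxabs
  have harc : arctanh' x = (1/2) * (Real.log (1 + x) - Real.log (1 - x)) := by
    rw [arctanh', Real.log_div (by linarith) (by linarith)]
  have harcsum : HasSum (fun k : ℕ => z ^ k / (2 * k + 1)) (arctanh' x / x) := by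
    have := hlog.mul_left (1 / (2 * x))
    have heq : (fun k : ℕ => (1 / (2 * x)) * ((2 : ℝ) * (1 / (2 * k + 1)) * x ^ (2 * k + 1)))
        = fun k : ℕ => z ^ k / (2 * k + 1) := by
      funext k
      have hpow : x ^ (2 * k + 1) = z ^ k * x := by
        rw [pow_succ, pow_mul, hx2]
      have h2k : (0:ℝ) < 2 * k + 1 := by positivity
      rw [hpow]
      field_simp
    rw [heq] at this
    have e : arctanh' x / x = 1 / (2 * x) * (Real.log (1 + x) - Real.log (1 - x)) := by
      rw [harc]
      field_simp
    rw [e]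
    exact this
  -- the shifted sum
  have hf : HasSum (fun n : ℕ => (3 / (2 * z)) * (z ^ n - z ^ n / (2 * n + 1)))
      ((3 / (2 * z)) * (1 / (1 - z) - arctanh' x / x)) :=
    (hgeo.sub harcsum).mul_left _
  set f : ℕ → ℝ := fun n => (3 / (2 * z)) * (z ^ n - z ^ n / (2 * n + 1)) with hfdef
  have hf0 : f 0 = 0 := by simp [hfdef]
  have hshift : HasSum (fun n : ℕ => f (n + 1))
      ((3 / (2 * z)) * (1 / (1 - z) - arctanh' x / x)) := by
    have := (hasSum_nat_add_iff' (f := f) 1).2 hf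
    simpa [hf0] using this
  have hterm : ∀ n : ℕ, f (n + 1) = 3 * (n + 1) / (2 * n + 3) * z ^ n := by
    intro n
    have hz : z ≠ 0 := h0.ne'
    have h23 : (2 * (n:ℝ) + 3) ≠ 0 := by positivity
    simp only [hfdef]
    push_cast
    field_simp
    ring
  rw [twoF1, tsum_congr (fun n => (term_eq z n).trans (hterm n).symm)]
  exact hshift.tsum_eq
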